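/- arXiv:2111.05086 — 9 statements merged into one kernel-verified Lean document; each statement's English description precedes it below -/
import Mathlib

section
/- For all positive integers m, the sum of gcd(a-1, m) over all integers a with 1 ≤ a ≤ m and gcd(a, m) = 1 equals d(m)·φ(m), where d(m) is the number of positive divisors of m and φ is Euler's totient function. (Menon's identity.) -/
/-!
Write `gcd(a - 1, m) = ∑_{e ∣ gcd(a - 1, m)} φ(e)` and exchange the two sums. For a divisor `e`
of `m`, the units `a` of `ZMod m` with `e ∣ a - 1` form the kernel of the surjective reduction
`(ZMod m)ˣ → (ZMod e)ˣ`, which therefore has `φ(m) / φ(e)` elements. Each divisor `e` thus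
contributes `φ(m)`.
-/

open Finset
open scoped Nat

theorem Nat.gcd_eq_sum_totient_filter_dvd (n : ℕ) {m : ℕ} (hm : m ≠ 0) :
    Nat.gcd n m = ∑ e ∈ m.divisors with e ∣ n, φ e := by
  have hdivisors : (m.divisors.filter (· ∣ n)) = (Nat.gcd n m).divisors := by
    ext e
    simp only [mem_filter, Nat.mem_divisors, Nat.dvd_gcd_iff, ne_eq, Nat.gcd_eq_zero_iff, hm,
      not_false_eq_true, and_false, and_true]
    tauto
  rw [hdivisors, Nat.sum_totient]

theorem ZMod.gcd_val_intCast (x : ℤ) (m : ℕ) [NeZero m] :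
    Nat.gcd (x : ZMod m).val m = Int.gcd x m := by
  rw [← Int.gcd_natCast_natCast, ZMod.val_intCast, Int.gcd_emod]

namespace ZMod

variable {m : ℕ} [NeZero m]

theorem sum_Icc_filter_coprime_eq_sum_units {M : Type*} [AddCommMonoid M] (f : ZMod m → M) :
    ∑ a ∈ Icc 1 m with a.Coprime m, f a = ∑ u : (ZMod m)ˣ, f u := by
  -- `x ↦ (x - 1).val + 1` identifies `ZMod m` with `{1, …, m}`
  refine sum_bij' (fun a ha => unitOfCoprime a (mem_filter.1 ha).2)
    (fun u _ => ((u : ZMod m) - 1).val + 1) (fun _ _ => mem_univ _) ?_ ?_ ?_ ?_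
  · intro u _
    have hval : (((u : ZMod m) - 1).val + 1 : ℕ) = (u : ZMod m) := by
      push_cast [natCast_val, cast_id]; ring
    simp only [mem_filter, mem_Icc, ← isUnit_iff_coprime, hval, u.isUnit, and_true]
    have := val_lt ((u : ZMod m) - 1)
    omega
  · intro a ha
    obtain ⟨⟨ha1, ham⟩, -⟩ := by simpa only [mem_filter, mem_Icc] using ha
    have hcast :
        ((unitOfCoprime a (mem_filter.1 ha).2 : ZMod m) - 1) = ((a - 1 : ℕ) : ZMod m) := by
      rw [coe_unitOfCoprime, Nat.cast_sub ha1, Nat.cast_one]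
    rw [hcast, val_natCast_of_lt (by omega)]
    omega
  · intro u _
    ext
    push_cast [coe_unitOfCoprime, natCast_val, cast_id]
    ring
  · intro a _
    rw [coe_unitOfCoprime]

theorem dvd_val_sub_one_iff_mem_ker_unitsMap {d : ℕ} (hd : d ∣ m) (u : (ZMod m)ˣ) :
    d ∣ ((u : ZMod m) - 1).val ↔ u ∈ (unitsMap hd).ker := by
  rw [MonoidHom.mem_ker, Units.ext_iff, unitsMap_def, Units.coe_map, Units.val_one,
    MonoidHom.coe_coe, ← sub_eq_zero, ← map_one (castHom hd (ZMod d)), ← map_sub,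
    castHom_apply, cast_eq_val, natCast_eq_zero_iff]

theorem card_ker_unitsMap_mul_totient {d : ℕ} (hd : d ∣ m) :
    Nat.card (unitsMap hd).ker * φ d = φ m := by
  have : NeZero d := ⟨fun h => NeZero.ne m (Nat.eq_zero_of_zero_dvd (h ▸ hd))⟩
  have hindex : (unitsMap hd).ker.index = φ d := by
    rw [Subgroup.index_ker, MonoidHom.range_eq_top_of_surjective _ (unitsMap_surjective hd),
      Subgroup.card_top, Nat.card_eq_fintype_card, card_units_eq_totient]
  rw [← hindex, Subgroup.card_mul_index, Nat.card_eq_fintype_card, card_units_eq_totient]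

theorem card_filter_dvd_val_sub_one_mul_totient {d : ℕ} (hd : d ∣ m) :
    #{u : (ZMod m)ˣ | d ∣ ((u : ZMod m) - 1).val} * φ d = φ m := by
  simp_rw [dvd_val_sub_one_iff_mem_ker_unitsMap hd]
  rw [← card_ker_unitsMap_mul_totient hd, Nat.card_eq_fintype_card, Fintype.card_subtype]

theorem sum_units_gcd_val_sub_one :
    ∑ u : (ZMod m)ˣ, Nat.gcd ((u : ZMod m) - 1).val m = m.divisors.card * φ m := by
  calc _ = ∑ u : (ZMod m)ˣ, ∑ e ∈ m.divisors,
        if e ∣ ((u : ZMod m) - 1).val then φ e else 0 := by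
        simp_rw [← sum_filter]
        exact sum_congr rfl fun u _ => Nat.gcd_eq_sum_totient_filter_dvd _ (NeZero.ne m)
    _ = ∑ e ∈ m.divisors, #{u : (ZMod m)ˣ | e ∣ ((u : ZMod m) - 1).val} * φ e := by
        rw [sum_comm]
        simp_rw [← sum_filter, sum_const, smul_eq_mul]
    _ = ∑ e ∈ m.divisors, φ m := sum_congr rfl fun e he =>
        card_filter_dvd_val_sub_one_mul_totient (Nat.dvd_of_mem_divisors he)
    _ = m.divisors.card * φ m := by rw [sum_const, smul_eq_mul]

end ZMod

/-- **Menon's identity.** For all positive integers `m`, the sum of `gcd(a-1, m)` over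
all integers `a` with `1 ≤ a ≤ m` and `gcd(a, m) = 1` equals `d(m)·φ(m)`. -/
theorem menon_identity (m : ℕ) (hm : 0 < m) :
    ∑ a ∈ (Finset.Icc 1 m).filter (fun a => Nat.gcd a m = 1),
      Int.gcd ((a : ℤ) - 1) (m : ℤ) = m.divisors.card * Nat.totient m := by
  have : NeZero m := ⟨hm.ne'⟩
  calc _ = ∑ a ∈ Icc 1 m with a.Coprime m, Nat.gcd (((a : ZMod m) - 1).val) m := by
        refine sum_congr rfl fun a _ => ?_
        rw [← ZMod.gcd_val_intCast]
        push_cast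
        rfl
    _ = ∑ u : (ZMod m)ˣ, Nat.gcd ((u : ZMod m) - 1).val m :=
        ZMod.sum_Icc_filter_coprime_eq_sum_units fun x : ZMod m => Nat.gcd (x - 1).val m
    _ = m.divisors.card * Nat.totient m := ZMod.sum_units_gcd_val_sub_one
end

section
/- For every integer s and every positive integer m, the sum of gcd(a-s, m) over all integers a with 1 ≤ a ≤ m and gcd(a, m) = 1 equals d_s(m)·φ(m), where d_s(m) is the s-free divisor function and φ is Euler's totient function. -/
/-- The `s`-free divisor function `d_s(m)`: the number of positive divisors `d` of `m`
with `gcd(d, s) = 1`. -/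
def sFreeDivisorCount (s : ℤ) (m : ℕ) : ℕ :=
  (m.divisors.filter fun d : ℕ => Int.gcd (d : ℤ) s = 1).card

/-!
Write `gcd(a - s, m) = ∑_{d ∣ gcd(a - s, m)} φ(d)` and exchange the sums. For `d ∣ m`, the
units `a` of `ZMod m` with `a ≡ s [ZMOD d]` form a fiber of the surjection
`(ZMod m)ˣ → (ZMod d)ˣ` over `s` when `s` is a unit mod `d`, so there are `φ(m) / φ(d)` of
them, and none otherwise. Hence each divisor `d` coprime to `s` contributes exactly `φ(m)`.
-/

open Finset
open scoped Nat

theorem Int.gcd_natCast_eq_sum_totient (x : ℤ) {m : ℕ} (hm : m ≠ 0) :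
    Int.gcd x m = ∑ d ∈ m.divisors with ↑d ∣ x, φ d := by
  rw [← Nat.sum_totient (Int.gcd x m)]
  refine sum_congr ?_ fun _ _ => rfl
  ext d
  have hgcd : x.gcd m ≠ 0 := Int.gcd_ne_zero_right (Int.natCast_ne_zero.mpr hm)
  simp only [Nat.mem_divisors, mem_filter, ← Int.natCast_dvd_natCast (m := d),
    Int.dvd_coe_gcd_iff]
  tauto

theorem MonoidHom.card_fiber_mul_card_of_surjective {G H : Type*} [Group G] [Group H]
    [Fintype G] [Fintype H] [DecidableEq H] (f : G →* H) (hf : Function.Surjective f) (h : H) :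
    #{g | f g = h} * Fintype.card H = Fintype.card G := calc
  _ = ∑ y : H, #{g | f g = y} := by
    rw [sum_congr rfl fun y _ => card_fiber_eq_of_mem_range f (hf y) (hf h), sum_const,
      card_univ, smul_eq_mul, mul_comm]
  _ = Fintype.card G := (card_eq_sum_card_fiberwise fun _ _ => mem_univ _).symm

namespace ZMod

open scoped Classical in
theorem totient_mul_card_units_cast_eq {m d : ℕ} [NeZero m] (hd : d ∣ m) (y : ZMod d) :
    φ d * #{u : (ZMod m)ˣ | cast (u : ZMod m) = y} = if IsUnit y then φ m else 0 := by
  split_ifs with hy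
  · have : NeZero d := ⟨fun h => NeZero.ne m (Nat.eq_zero_of_zero_dvd (h ▸ hd))⟩
    obtain ⟨v, rfl⟩ := hy
    simp_rw [← unitsMap_val hd, Units.val_inj]
    rw [mul_comm, ← card_units_eq_totient, ← card_units_eq_totient]
    exact (unitsMap hd).card_fiber_mul_card_of_surjective (unitsMap_surjective hd) v
  · rw [Finset.card_eq_zero.mpr, mul_zero]
    exact filter_eq_empty_iff.mpr fun u _ hu => hy (hu ▸ isUnit_cast_of_dvd hd u)

theorem val_natCast_sub_one {m a : ℕ} (ha : 1 ≤ a) (ham : a ≤ m) :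
    ((a : ZMod m) - 1).val = a - 1 := by
  rw [← Nat.cast_one, ← Nat.cast_sub ha, val_cast_of_lt (by omega)]

theorem sum_filter_coprime_Icc_eq_sum_units {M : Type*} [AddCommMonoid M] (m : ℕ) [NeZero m]
    (f : ZMod m → M) : ∑ a ∈ Icc 1 m with a.gcd m = 1, f a = ∑ u : (ZMod m)ˣ, f u := by
  have hrep (u : (ZMod m)ˣ) : ((((u : ZMod m) - 1).val + 1 : ℕ) : ZMod m) = u := by
    push_cast
    rw [natCast_zmod_val, sub_add_cancel]
  refine sum_bij' (fun a ha => unitOfCoprime a (mem_filter.mp ha).2)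
    (fun u _ => ((u : ZMod m) - 1).val + 1) (fun _ _ => mem_univ _) ?_ ?_ ?_ ?_
  · intro u _
    refine mem_filter.mpr ⟨mem_Icc.mpr ⟨by omega, val_lt _⟩, ?_⟩
    exact (isUnit_iff_coprime _ m).mp (by rw [hrep]; exact u.isUnit)
  · intro a ha
    obtain ⟨ha1, ham⟩ := mem_Icc.mp (mem_filter.mp ha).1
    simp only [coe_unitOfCoprime, val_natCast_sub_one ha1 ham]
    omega
  · exact fun u _ => Units.ext (hrep u)
  · exact fun _ _ => rfl

end ZMod

theorem sum_filter_coprime_Icc_ite_dvd_sub {m d : ℕ} [NeZero m] (hd : d ∣ m) (s : ℤ) :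
    ∑ a ∈ Icc 1 m with a.gcd m = 1, (if (d : ℤ) ∣ a - s then φ d else 0)
      = if Int.gcd d s = 1 then φ m else 0 := by
  have hdvd (a : ℕ) : (d : ℤ) ∣ a - s ↔ ZMod.cast (a : ZMod m) = (s : ZMod d) := by
    rw [ZMod.cast_natCast hd, ← Int.cast_natCast (R := ZMod d) a,
      ZMod.intCast_eq_intCast_iff_dvd_sub, dvd_sub_comm]
  simp_rw [hdvd]
  rw [ZMod.sum_filter_coprime_Icc_eq_sum_units m
      fun x => if ZMod.cast x = (s : ZMod d) then φ d else 0,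
    sum_ite, sum_const_zero, add_zero, sum_const, smul_eq_mul, mul_comm,
    ZMod.totient_mul_card_units_cast_eq hd]
  simp only [ZMod.coe_int_isUnit_iff_isCoprime, Int.isCoprime_iff_gcd_eq_one]

/-- For every integer `s` and every positive integer `m`, the sum of `gcd(a-s, m)` over
all integers `a` with `1 ≤ a ≤ m` and `gcd(a, m) = 1` equals `d_s(m)·φ(m)`. -/
theorem menon_identity_shift (s : ℤ) (m : ℕ) (hm : 0 < m) :
    ∑ a ∈ (Finset.Icc 1 m).filter (fun a => Nat.gcd a m = 1),
      Int.gcd ((a : ℤ) - s) (m : ℤ) = sFreeDivisorCount s m * Nat.totient m := by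
  have : NeZero m := ⟨hm.ne'⟩
  calc ∑ a ∈ Icc 1 m with a.gcd m = 1, Int.gcd ((a : ℤ) - s) m
      = ∑ a ∈ Icc 1 m with a.gcd m = 1, ∑ d ∈ m.divisors,
          if (d : ℤ) ∣ a - s then φ d else 0 := by
        simp_rw [Int.gcd_natCast_eq_sum_totient _ hm.ne', sum_filter]
    _ = ∑ d ∈ m.divisors, ∑ a ∈ Icc 1 m with a.gcd m = 1,
          if (d : ℤ) ∣ a - s then φ d else 0 := sum_comm
    _ = ∑ d ∈ m.divisors, if Int.gcd d s = 1 then φ m else 0 :=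
        sum_congr rfl fun d hd =>
          sum_filter_coprime_Icc_ite_dvd_sub (Nat.dvd_of_mem_divisors hd) s
    _ = sFreeDivisorCount s m * φ m := by
        rw [← sum_filter, sum_const, smul_eq_mul]
        rfl
end

section
/- For every positive integer k, the Eckford Cohen totient function φ^(k) is a multiplicative arithmetic function: if m₁ and m₂ are relatively prime positive integers, then φ^(k)(m₁m₂) = φ^(k)(m₁)·φ^(k)(m₂). -/
/-- The k-th power greatest common divisor `(a,b)_k`: the largest k-th power `d^k`
(with `d` a positive integer) dividing both `a` and `b`. -/
noncomputable def kgcd (k : ℕ) (a b : ℤ) : ℕ :=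
  sSup {n : ℕ | (∃ d : ℕ, 0 < d ∧ n = d ^ k) ∧ (n : ℤ) ∣ a ∧ (n : ℤ) ∣ b}

/-- The Eckford Cohen totient function `φ^(k)(m)`: the number of integers `a` with
`1 ≤ a ≤ m^k` and `(a, m^k)_k = 1`. -/
noncomputable def cohenTotient (k m : ℕ) : ℕ :=
  ((Finset.Icc 1 (m ^ k)).filter fun a : ℕ => kgcd k (a : ℤ) ((m : ℤ) ^ k) = 1).card

/-!
For `k > 0`, `(a, m^k)_k = 1` says that no divisor `d > 1` of `m` has `d^k ∣ a`. This condition is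
periodic in `a` with period `m^k`, and for `m = m₁ m₂` it is the conjunction of the conditions for
`m₁` and `m₂`, since every divisor of `m₁ m₂` is a product of divisors of `m₁` and `m₂`. When
`m₁, m₂` are coprime, the Chinese remainder theorem identifies residues modulo `m₁^k m₂^k` with
pairs of residues modulo `m₁^k` and `m₂^k`, and the count factors.
-/

open Finset Function

namespace Nat

theorem count_and_mul_of_periodic {p q : ℕ → Prop} [DecidablePred p] [DecidablePred q]
    {m n : ℕ} (hmn : m.Coprime n) (hp : Periodic p m) (hq : Periodic q n) :
    count (fun a => p a ∧ q a) (m * n) = count p m * count q n := by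
  rcases eq_or_ne m 0 with rfl | hm
  · simp
  rcases eq_or_ne n 0 with rfl | hn
  · simp
  have mod_crt {b₁ b₂ : ℕ} (h₁ : b₁ < m) (h₂ : b₂ < n) :
      chineseRemainder hmn b₁ b₂ % m = b₁ ∧ chineseRemainder hmn b₁ b₂ % n = b₂ :=
    ⟨Eq.trans (chineseRemainder hmn b₁ b₂).prop.1 (mod_eq_of_lt h₁),
      Eq.trans (chineseRemainder hmn b₁ b₂).prop.2 (mod_eq_of_lt h₂)⟩
  simp only [count_eq_card_filter_range, ← card_product, ← filter_product]
  refine card_nbij' (fun a => (a % m, a % n)) (fun b => chineseRemainder hmn b.1 b.2)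
    ?_ ?_ ?_ ?_ <;> simp only [Set.MapsTo, Set.LeftInvOn, coe_filter, mem_range,
      Set.mem_ofPred_eq, mem_product, and_imp, Prod.forall]
  · intro a ha hpa hqa
    exact ⟨⟨mod_lt a (pos_of_ne_zero hm), mod_lt a (pos_of_ne_zero hn)⟩,
      (hp.map_mod_nat a).symm ▸ hpa, (hq.map_mod_nat a).symm ▸ hqa⟩
  · intro b₁ b₂ h₁ h₂ hpb hqb
    obtain ⟨e₁, e₂⟩ := mod_crt h₁ h₂
    refine ⟨chineseRemainder_lt_mul hmn b₁ b₂ hm hn, ?_, ?_⟩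
    · rwa [← hp.map_mod_nat, e₁]
    · rwa [← hq.map_mod_nat, e₂]
  · intro a ha _ _
    exact ((chineseRemainder_modEq_unique hmn (mod_modEq a m).symm
      (mod_modEq a n).symm).symm.eq_of_lt_of_lt (chineseRemainder_lt_mul hmn _ _ hm hn) ha)
  · intro b₁ b₂ h₁ h₂ _ _
    exact Prod.ext_iff.mpr (mod_crt h₁ h₂)

end Nat

def PowCoprime (k a m : ℕ) : Prop := ∀ d, d ∣ m → d ^ k ∣ a → d = 1

theorem kgcd_eq_one_iff_powCoprime {k a m : ℕ} (hk : k ≠ 0) (ha : 0 < a) :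
    kgcd k a ((m : ℤ) ^ k) = 1 ↔ PowCoprime k a m := by
  set S := {n : ℕ | (∃ d : ℕ, 0 < d ∧ n = d ^ k) ∧ (n : ℤ) ∣ a ∧ (n : ℤ) ∣ (m : ℤ) ^ k}
  have bdd : BddAbove S := ⟨a, fun n hn => Nat.le_of_dvd ha (Int.natCast_dvd_natCast.mp hn.2.1)⟩
  have one_mem : 1 ∈ S := ⟨⟨1, one_pos, (one_pow k).symm⟩, one_dvd _, one_dvd _⟩
  constructor
  · intro hS d hdm hda
    have d_pos : 0 < d := Nat.pos_of_ne_zero <| by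
      rintro rfl
      rw [zero_pow hk, zero_dvd_iff] at hda
      exact ha.ne' hda
    have : d ^ k ≤ 1 := hS ▸ le_csSup bdd
      ⟨⟨d, d_pos, rfl⟩, by exact_mod_cast hda, by exact_mod_cast pow_dvd_pow_of_dvd hdm k⟩
    exact le_antisymm ((Nat.pow_le_one_iff hk).mp this) d_pos
  · intro h
    refine le_antisymm (csSup_le ⟨1, one_mem⟩ ?_) (le_csSup bdd one_mem)
    rintro _ ⟨⟨d, -, rfl⟩, hda, hdm⟩
    rw [h d ((Nat.pow_dvd_pow_iff hk).mp (by exact_mod_cast hdm)) (by exact_mod_cast hda),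
      one_pow]

theorem powCoprime_periodic (k m : ℕ) : Periodic (PowCoprime k · m) (m ^ k) := fun a =>
  propext <| forall₂_congr fun _ hd => by rw [Nat.dvd_add_left (pow_dvd_pow_of_dvd hd k)]

theorem powCoprime_mul_iff {k a m n : ℕ} :
    PowCoprime k a (m * n) ↔ PowCoprime k a m ∧ PowCoprime k a n := by
  refine ⟨fun h => ⟨fun d hd => h d (hd.mul_right n), fun d hd => h d (hd.mul_left m)⟩, ?_⟩
  rintro ⟨hm, hn⟩ d hd hda
  obtain ⟨d₁, d₂, h₁, h₂, rfl⟩ := Nat.dvd_mul.mp hd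
  rw [mul_pow] at hda
  rw [hm d₁ h₁ (dvd_of_mul_right_dvd hda), hn d₂ h₂ (dvd_of_mul_left_dvd hda), mul_one]

open scoped Classical in
theorem cohenTotient_eq_count {k : ℕ} (hk : k ≠ 0) (m : ℕ) :
    cohenTotient k m = Nat.count (PowCoprime k · m) (m ^ k) := by
  rw [cohenTotient, ← Nat.filter_Ico_card_eq_of_periodic 1 _ _ (powCoprime_periodic k m),
    add_comm, Ico_add_one_right_eq_Icc]
  exact congrArg card (filter_congr fun a ha => kgcd_eq_one_iff_powCoprime hk (mem_Icc.mp ha).1)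

theorem cohenTotient_multiplicative_general (k : ℕ) (hk : 0 < k) (m₁ m₂ : ℕ)
    (h : Nat.Coprime m₁ m₂) :
    cohenTotient k (m₁ * m₂) = cohenTotient k m₁ * cohenTotient k m₂ := by
  classical
  simp only [cohenTotient_eq_count hk.ne', mul_pow, powCoprime_mul_iff]
  exact Nat.count_and_mul_of_periodic (h.pow k k) (powCoprime_periodic k m₁)
    (powCoprime_periodic k m₂)

/-- The Eckford Cohen totient function is multiplicative. -/
theorem cohenTotient_multiplicative (k : ℕ) (hk : 0 < k) (m₁ m₂ : ℕ)
    (hm₁ : 0 < m₁) (hm₂ : 0 < m₂) (h : Nat.Coprime m₁ m₂) :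
    cohenTotient k (m₁ * m₂) = cohenTotient k m₁ * cohenTotient k m₂ :=
  cohenTotient_multiplicative_general k hk m₁ m₂ h
end

section
/- For all positive integers k and m, φ^(k)(m) = m^k · ∏_{p | m} (1 - 1/p^k), where the product is over the distinct primes p dividing m. -/
/-! Because `a ≠ 0`, the condition `(a, m^k)_k = 1` says that `p^k ∤ a` for every prime `p ∣ m`.
The moduli `p^k` are pairwise coprime divisors of `m^k`, so inclusion–exclusion over the sets `t`
of prime factors of `m` counts these `a ≤ m^k` as `∑_t (-1)^|t| m^k / ∏_{p ∈ t} p^k`, which is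
the expansion of `m^k ∏_p (1 - 1/p^k)`. -/

open Finset Function

lemma kgcd_eq_one_iff {k : ℕ} {a b : ℤ} (hk : k ≠ 0) (ha : a ≠ 0) :
    kgcd k a b = 1 ↔ ∀ p : ℕ, p.Prime → ¬ ((p : ℤ) ^ k ∣ a ∧ (p : ℤ) ^ k ∣ b) := by
  set S := {n : ℕ | (∃ d : ℕ, 0 < d ∧ n = d ^ k) ∧ (n : ℤ) ∣ a ∧ (n : ℤ) ∣ b}
  have hbdd : BddAbove S := ⟨a.natAbs, fun n hn =>
    Nat.le_of_dvd (Int.natAbs_pos.2 ha) (Int.natCast_dvd.1 hn.2.1)⟩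
  have hone : 1 ∈ S := ⟨⟨1, one_pos, (one_pow k).symm⟩, one_dvd a, one_dvd b⟩
  change sSup S = 1 ↔ _
  constructor
  · rintro h p hp ⟨hpa, hpb⟩
    have hle : p ^ k ≤ 1 :=
      h ▸ le_csSup hbdd ⟨⟨p, hp.pos, rfl⟩, by exact_mod_cast hpa, by exact_mod_cast hpb⟩
    exact (Nat.one_lt_pow hk hp.one_lt).not_ge hle
  · refine fun h => IsGreatest.csSup_eq ⟨hone, ?_⟩
    rintro _ ⟨⟨d, hd, rfl⟩, hda, hdb⟩
    obtain rfl | hd1 := eq_or_ne d 1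
    · simp
    have hp := Nat.minFac_prime hd1
    have hpd : ((d.minFac : ℤ) ^ k) ∣ ((d ^ k : ℕ) : ℤ) := by
      exact_mod_cast pow_dvd_pow_of_dvd d.minFac_dvd k
    exact absurd ⟨hpd.trans hda, hpd.trans hdb⟩ (h _ hp)

lemma kgcd_natCast_pow_eq_one_iff {k m a : ℕ} (hk : k ≠ 0) (hm : m ≠ 0) (ha : a ≠ 0) :
    kgcd k a ((m : ℤ) ^ k) = 1 ↔ ∀ p ∈ m.primeFactors, ¬ p ^ k ∣ a := by
  rw [kgcd_eq_one_iff hk (Int.natCast_ne_zero.2 ha)]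
  simp only [← Nat.cast_pow, Int.natCast_dvd_natCast, Nat.pow_dvd_pow_iff hk,
    Nat.mem_primeFactors, hm, ne_eq, not_false_eq_true, and_true, and_imp, not_and]
  exact forall₂_congr fun _ _ => imp_not_comm

lemma prod_dvd_iff_of_pairwise_coprime {ι : Type*} {s : Finset ι} {d : ι → ℕ}
    (hd : (s : Set ι).Pairwise (Nat.Coprime on d)) {a : ℕ} :
    ∏ i ∈ s, d i ∣ a ↔ ∀ i ∈ s, d i ∣ a := by
  refine ⟨fun h i hi => (dvd_prod_of_mem d hi).trans h, fun h => ?_⟩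
  rw [← Int.natCast_dvd_natCast, Nat.cast_prod]
  exact prod_dvd_of_coprime (hd.mono' fun _ _ => Nat.isCoprime_iff_coprime.2)
    fun i hi => Int.natCast_dvd_natCast.2 (h i hi)

lemma ite_forall_not_dvd_eq_sum_powerset {ι R : Type*} [DecidableEq ι] [CommRing R]
    {s : Finset ι} {d : ι → ℕ} (hd : (s : Set ι).Pairwise (Nat.Coprime on d)) (a : ℕ) :
    (if ∀ i ∈ s, ¬ d i ∣ a then 1 else 0 : R) =
      ∑ t ∈ s.powerset, (-1) ^ #t * if ∏ i ∈ t, d i ∣ a then 1 else 0 := by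
  have hnot : ∀ i, (if ¬ d i ∣ a then 1 else 0 : R) = 1 - if d i ∣ a then 1 else 0 :=
    fun i => by split_ifs <;> simp
  rw [← prod_boole, prod_congr rfl fun i _ => hnot i, prod_sub]
  refine sum_congr rfl fun t ht => ?_
  simp only [prod_const_one, mul_one, prod_boole,
    prod_dvd_iff_of_pairwise_coprime (hd.mono (mem_powerset.1 ht))]

theorem card_filter_forall_not_dvd {ι : Type*} [DecidableEq ι] {s : Finset ι} {d : ι → ℕ}
    (hd : (s : Set ι).Pairwise (Nat.Coprime on d)) {N : ℕ} (hN : ∀ i ∈ s, d i ∣ N) :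
    (#{a ∈ Ioc 0 N | ∀ i ∈ s, ¬ d i ∣ a} : ℚ) = N * ∏ i ∈ s, (1 - 1 / (d i : ℚ)) := by
  have hterm : ∀ t ∈ s.powerset,
      ∑ a ∈ Ioc 0 N, (if ∏ i ∈ t, d i ∣ a then 1 else 0 : ℚ) = N * ∏ i ∈ t, 1 / (d i : ℚ) := by
    intro t ht
    have hdvd : ∏ i ∈ t, d i ∣ N := (prod_dvd_iff_of_pairwise_coprime
      (hd.mono (mem_powerset.1 ht))).2 fun i hi => hN i (mem_powerset.1 ht hi)
    rw [sum_boole, Nat.Ioc_filter_dvd_card_eq_div, Nat.cast_div_charZero hdvd,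
      prod_div_distrib, prod_const_one, Nat.cast_prod, mul_one_div]
  calc (#{a ∈ Ioc 0 N | ∀ i ∈ s, ¬ d i ∣ a} : ℚ)
      = ∑ a ∈ Ioc 0 N, ∑ t ∈ s.powerset, (-1) ^ #t * if ∏ i ∈ t, d i ∣ a then 1 else 0 := by
        rw [natCast_card_filter]
        exact sum_congr rfl fun a _ => ite_forall_not_dvd_eq_sum_powerset hd a
    _ = ∑ t ∈ s.powerset, (-1) ^ #t * (N * ∏ i ∈ t, 1 / (d i : ℚ)) := by
        rw [sum_comm]
        exact sum_congr rfl fun t ht => by rw [← mul_sum, hterm t ht]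
    _ = N * ∏ i ∈ s, (1 - 1 / (d i : ℚ)) := by
        rw [prod_sub, mul_sum]
        exact sum_congr rfl fun t _ => by rw [prod_const_one]; ring

/-- `φ^(k)(m) = m^k · ∏_{p ∣ m} (1 - 1/p^k)`, the product being over the distinct
primes dividing `m`. -/
theorem cohenTotient_prod_formula (k m : ℕ) (hk : 0 < k) (hm : 0 < m) :
    (cohenTotient k m : ℚ) = (m : ℚ) ^ k * ∏ p ∈ m.primeFactors, (1 - 1 / (p : ℚ) ^ k) := by
  -- `Icc 1 n` and `Ioc 0 n` are definitionally equal on `ℕ`.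
  have hcard : cohenTotient k m = #{a ∈ Ioc 0 (m ^ k) | ∀ p ∈ m.primeFactors, ¬ p ^ k ∣ a} :=
    congrArg card <| filter_congr fun a ha =>
      kgcd_natCast_pow_eq_one_iff hk.ne' hm.ne' (Nat.one_le_iff_ne_zero.1 (mem_Icc.1 ha).1)
  have hcoprime : (m.primeFactors : Set ℕ).Pairwise (Nat.Coprime on (· ^ k)) :=
    fun p hp q hq hpq => ((Nat.coprime_primes (Nat.prime_of_mem_primeFactors hp)
      (Nat.prime_of_mem_primeFactors hq)).2 hpq).pow k k
  rw [hcard, card_filter_forall_not_dvd hcoprime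
    fun p hp => pow_dvd_pow_of_dvd (Nat.dvd_of_mem_primeFactors hp) k]
  push_cast
  rfl
end

section
/- For all positive integers k and m, P^(k)(m) = ∑_{d | m} d^k · φ^(k)(m/d), where the sum is over the positive divisors d of m. -/
/-- The k-th power gcd sum function (Pillai): `P^(k)(m) = ∑_{a=1}^{m^k} (a, m^k)_k`. -/
noncomputable def Pk (k m : ℕ) : ℕ :=
  ∑ a ∈ Finset.Icc 1 (m ^ k), kgcd k (a : ℤ) ((m : ℤ) ^ k)

/-!
For `a ≥ 1` put `g = gcd(a, m^k)`. Since `e^k ∣ g` and `f^k ∣ g` imply `lcm(e, f)^k ∣ g`, there is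
a single `r` with `e^k ∣ g ↔ e ∣ r`; hence `(a, m^k)_k = r^k` with `r ∣ m`. Grouping the
`a ≤ m^k` by this `r = d`, the homogeneity `(d^k x, d^k y)_k = d^k (x, y)_k` shows that the class of
`d` is `{d^k b : b ≤ (m/d)^k, (b, (m/d)^k)_k = 1}`, which has `φ^(k)(m/d)` elements.
-/

open Finset

section

variable {k : ℕ}

namespace Nat

theorem exists_forall_pow_dvd_iff_dvd (hk : k ≠ 0) {g : ℕ} (hg : g ≠ 0) :
    ∃ r, ∀ e, e ^ k ∣ g ↔ e ∣ r := by
  classical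
  let T := g.divisors.filter (· ^ k ∣ g)
  have mem_T {e : ℕ} (he : e ^ k ∣ g) : e ∈ T :=
    mem_filter.2 ⟨Nat.mem_divisors.2 ⟨(dvd_pow_self e hk).trans he, hg⟩, he⟩
  have hT : T.Nonempty := ⟨1, mem_T (by simp)⟩
  have hr := (mem_filter.1 (T.max'_mem hT)).2
  refine ⟨T.max' hT, fun e => ⟨fun he => ?_, fun he => (pow_dvd_pow_of_dvd he k).trans hr⟩⟩
  have hl : (e.lcm (T.max' hT)) ^ k ∣ g := pow_lcm_pow ▸ Nat.lcm_dvd he hr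
  have hr0 : T.max' hT ≠ 0 := fun h0 => hg (by simpa [h0, hk] using hr)
  have he0 : e ≠ 0 := fun h0 => hg (by simpa [h0, hk] using he)
  have hlr : e.lcm (T.max' hT) = T.max' hT :=
    le_antisymm (T.le_max' _ (mem_T hl))
      (le_of_dvd (Nat.pos_of_ne_zero (lcm_ne_zero he0 hr0)) (dvd_lcm_right _ _))
  exact hlr ▸ dvd_lcm_left _ _

theorem pow_dvd_pow_mul_iff_dvd_mul {g r : ℕ} (hr : ∀ e, e ^ k ∣ g ↔ e ∣ r) {c : ℕ} (hc : c ≠ 0)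
    (e : ℕ) : e ^ k ∣ c ^ k * g ↔ e ∣ c * r := by
  refine ⟨fun he => ?_, fun he => ?_⟩
  · obtain ⟨f, hf⟩ := dvd_lcm_right e c
    have hfg : f ^ k ∣ g := by
      have : (c * f) ^ k ∣ c ^ k * g := hf ▸ pow_lcm_pow ▸ Nat.lcm_dvd he (dvd_mul_right _ _)
      rwa [mul_pow, Nat.mul_dvd_mul_iff_left (pow_pos (Nat.pos_of_ne_zero hc) k)] at this
    exact (dvd_lcm_left e c).trans (hf ▸ mul_dvd_mul_left c ((hr f).1 hfg))
  · exact (pow_dvd_pow_of_dvd he k).trans (mul_pow c r k ▸ mul_dvd_mul_left _ ((hr r).2 dvd_rfl))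

end Nat

theorem kgcd_eq_pow (hk : k ≠ 0) {a b : ℤ} (hab : Int.gcd a b ≠ 0) {r : ℕ}
    (hr : ∀ e, e ^ k ∣ Int.gcd a b ↔ e ∣ r) : kgcd k a b = r ^ k := by
  have hr0 : r ≠ 0 := fun h0 => hab (by simpa [hk] using (hr 0).2 (h0 ▸ dvd_rfl))
  refine IsGreatest.csSup_eq
    ⟨⟨⟨r, Nat.pos_of_ne_zero hr0, rfl⟩, Int.dvd_gcd_iff.1 ((hr r).2 dvd_rfl)⟩, ?_⟩
  rintro _ ⟨⟨e, -, rfl⟩, hea, heb⟩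
  have her : e ∣ r := (hr e).1 (Int.dvd_gcd_iff.2 ⟨hea, heb⟩)
  exact Nat.pow_le_pow_left (Nat.le_of_dvd (Nat.pos_of_ne_zero hr0) her) k

theorem exists_kgcd_eq_pow (hk : k ≠ 0) {a b : ℤ} (hab : Int.gcd a b ≠ 0) :
    ∃ r, kgcd k a b = r ^ k ∧ r ^ k ∣ Int.gcd a b := by
  obtain ⟨r, hr⟩ := Nat.exists_forall_pow_dvd_iff_dvd hk hab
  exact ⟨r, kgcd_eq_pow hk hab hr, (hr r).2 dvd_rfl⟩

theorem kgcd_dvd_left (hk : k ≠ 0) {a b : ℤ} (hab : Int.gcd a b ≠ 0) : (kgcd k a b : ℤ) ∣ a := by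
  obtain ⟨r, hkr, hr⟩ := exists_kgcd_eq_pow hk hab
  exact hkr ▸ (Int.dvd_gcd_iff.1 hr).1

theorem kgcd_pow_mul_pow_mul (hk : k ≠ 0) {a b : ℤ} (hab : Int.gcd a b ≠ 0) {c : ℕ} (hc : c ≠ 0) :
    kgcd k (c ^ k * a) (c ^ k * b) = c ^ k * kgcd k a b := by
  obtain ⟨r, hr⟩ := Nat.exists_forall_pow_dvd_iff_dvd hk hab
  have hgcd : Int.gcd (c ^ k * a) (c ^ k * b) = c ^ k * Int.gcd a b := by
    rw [Int.gcd_mul_left, Int.natAbs_pow, Int.natAbs_natCast]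
  rw [kgcd_eq_pow hk hab hr, kgcd_eq_pow hk (hgcd ▸ mul_ne_zero (pow_ne_zero k hc) hab)
    (hgcd ▸ Nat.pow_dvd_pow_mul_iff_dvd_mul hr hc), mul_pow]

theorem card_filter_kgcd_eq_pow (hk : k ≠ 0) {d : ℕ} (hd : d ≠ 0) (n : ℕ) :
    #{a ∈ Icc 1 ((d * n) ^ k) | kgcd k ((a : ℕ) : ℤ) (((d * n : ℕ) : ℤ) ^ k) = d ^ k} =
      cohenTotient k n := by
  have hdk : 0 < d ^ k := pow_pos (Nat.pos_of_ne_zero hd) k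
  have kgcd_mul {b : ℕ} (hb : 1 ≤ b) :
      kgcd k ((d ^ k * b : ℕ) : ℤ) (((d * n : ℕ) : ℤ) ^ k) = d ^ k * kgcd k b ((n : ℤ) ^ k) := by
    push_cast
    rw [mul_pow, kgcd_pow_mul_pow_mul hk _ hd]
    simp only [ne_eq, Int.gcd_eq_zero_iff]
    omega
  symm
  rw [cohenTotient, ← card_map ⟨(d ^ k * ·), mul_right_injective₀ hdk.ne'⟩]
  refine congrArg card (ext fun a => ?_)
  simp only [mem_filter, mem_map, mem_Icc, Function.Embedding.coeFn_mk, mul_pow]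
  constructor
  · rintro ⟨b, ⟨⟨hb, hbn⟩, hkb⟩, rfl⟩
    refine ⟨⟨Nat.mul_pos hdk hb, Nat.mul_le_mul_left _ hbn⟩, ?_⟩
    rw [kgcd_mul hb, hkb, mul_one]
  · rintro ⟨⟨ha, ham⟩, hka⟩
    have hdvd : ((d ^ k : ℕ) : ℤ) ∣ a := hka ▸ kgcd_dvd_left hk (by simp; omega)
    obtain ⟨b, rfl⟩ := Int.natCast_dvd_natCast.1 hdvd
    have hb : 1 ≤ b := Nat.pos_of_mul_pos_left ha
    refine ⟨b, ⟨⟨hb, le_of_mul_le_mul_left ham hdk⟩, ?_⟩, rfl⟩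
    rwa [kgcd_mul hb, Nat.mul_eq_left hdk.ne'] at hka

theorem kgcd_mem_image_pow_divisors (hk : k ≠ 0) {m : ℕ} (hm : m ≠ 0) {a : ℕ} (ha : a ≠ 0) :
    kgcd k (a : ℤ) ((m : ℤ) ^ k) ∈ m.divisors.image (· ^ k) := by
  obtain ⟨r, hkr, hr⟩ := exists_kgcd_eq_pow (a := a) (b := (m : ℤ) ^ k) hk (by simp [ha])
  have hrm : r ^ k ∣ m ^ k := by exact_mod_cast (Int.dvd_gcd_iff.1 hr).2
  exact mem_image.2 ⟨r, Nat.mem_divisors.2 ⟨(Nat.pow_dvd_pow_iff hk).1 hrm, hm⟩, hkr.symm⟩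

end

theorem Pk_eq_sum_divisors_general (k m : ℕ) (hk : 0 < k) :
    Pk k m = ∑ d ∈ m.divisors, d ^ k * cohenTotient k (m / d) := by
  have hmaps : ∀ a ∈ Icc 1 (m ^ k), kgcd k (a : ℤ) ((m : ℤ) ^ k) ∈ m.divisors.image (· ^ k) := by
    intro a ha
    obtain ⟨ha1, ham⟩ := mem_Icc.1 ha
    have hm : m ≠ 0 := by rintro rfl; simp [hk.ne'] at ham; omega
    exact kgcd_mem_image_pow_divisors hk.ne' hm (by omega)
  rw [Pk, ← sum_fiberwise_of_maps_to hmaps,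
    sum_image fun d _ e _ h => Nat.pow_left_injective hk.ne' h]
  refine sum_congr rfl fun d hd => ?_
  have hd0 : d ≠ 0 := (Nat.pos_of_mem_divisors hd).ne'
  obtain ⟨n, rfl⟩ := (Nat.mem_divisors.1 hd).1
  rw [sum_congr rfl fun a ha => (mem_filter.1 ha).2, sum_const, smul_eq_mul,
    card_filter_kgcd_eq_pow hk.ne' hd0, Nat.mul_div_cancel_left n (Nat.pos_of_ne_zero hd0),
    mul_comm]

/-- `P^(k)(m) = ∑_{d ∣ m} d^k · φ^(k)(m/d)`. -/
theorem Pk_eq_sum_divisors (k m : ℕ) (hk : 0 < k) (hm : 0 < m) :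
    Pk k m = ∑ d ∈ m.divisors, d ^ k * cohenTotient k (m / d) :=
  Pk_eq_sum_divisors_general k m hk
end

section
/- For every positive integer k, every prime p, and every positive integer v, P^(k)(p^v) = (v+1)·p^{vk} - v·p^{(v-1)k}. -/
/-!
Writing `J(a) = min v (v_p(a) / k)`, the summand `(a, p^{vk})_k` equals `p^{J(a) k}`, which
telescopes as `1 + ∑_{j < v} [p^{(j+1)k} ∣ a] (p^{(j+1)k} - p^{jk})`. Summing over
`1 ≤ a ≤ p^{vk}` and swapping the sums, the `j`-th term is counted `p^{(v-j-1)k}` times, so each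
of the `v` layers contributes exactly `p^{vk} - p^{(v-1)k}`.
-/

open Finset

lemma kgcd_natCast_eq_of_isGreatest {k a b n : ℕ}
    (h : IsGreatest {n : ℕ | (∃ d : ℕ, 0 < d ∧ n = d ^ k) ∧ n ∣ a ∧ n ∣ b} n) :
    kgcd k a b = n := by
  simpa only [kgcd, Int.natCast_dvd_natCast] using h.csSup_eq

lemma kgcd_prime_pow {k p : ℕ} (hk : k ≠ 0) (hp : p.Prime) (w : ℕ) {a : ℕ} (ha : a ≠ 0) :
    kgcd k a (((p ^ w : ℕ) : ℤ) ^ k) = p ^ (min w (padicValNat p a / k) * k) := by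
  have : Fact p.Prime := ⟨hp⟩
  have hpow_dvd_iff (j : ℕ) : p ^ (j * k) ∣ a ↔ j ≤ padicValNat p a / k := by
    rw [padicValNat_dvd_iff_le ha, Nat.le_div_iff_mul_le (Nat.pos_of_ne_zero hk)]
  rw [show (((p ^ w : ℕ) : ℤ) ^ k) = (((p ^ w) ^ k : ℕ) : ℤ) by push_cast; rfl]
  apply kgcd_natCast_eq_of_isGreatest
  refine ⟨⟨⟨p ^ min w (padicValNat p a / k), pow_pos hp.pos _, pow_mul ..⟩, ?_, ?_⟩, ?_⟩
  · exact (hpow_dvd_iff _).2 (min_le_right ..)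
  · rw [pow_mul]
    exact pow_dvd_pow_of_dvd (pow_dvd_pow p (min_le_left ..)) k
  · rintro _ ⟨⟨d, -, rfl⟩, hda, hdb⟩
    obtain ⟨j, hjw, rfl⟩ := (Nat.dvd_prime_pow hp).1 ((Nat.pow_dvd_pow_iff hk).1 hdb)
    rw [← pow_mul] at hda ⊢
    exact Nat.pow_le_pow_right hp.pos
      (Nat.mul_le_mul_right k (le_min hjw ((hpow_dvd_iff j).1 hda)))

lemma Monotone.apply_eq_add_sum_ite_lt {f : ℕ → ℕ} (hf : Monotone f) {J v : ℕ} (hJ : J ≤ v) :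
    f J = f 0 + ∑ j ∈ range v, if j < J then f (j + 1) - f j else 0 := by
  rw [← sum_filter, show (range v).filter (· < J) = range J by ext; simp; omega,
    sum_range_tsub hf]
  have := hf (Nat.zero_le J)
  omega

lemma Nat.sum_Icc_ite_dvd (N m c : ℕ) :
    ∑ a ∈ Icc 1 N, (if m ∣ a then c else 0) = N / m * c := by
  rw [← sum_filter, sum_const, smul_eq_mul, ← Nat.Ioc_filter_dvd_card_eq_div]
  rfl

lemma kgcd_prime_pow_eq_layers {k p : ℕ} (hk : k ≠ 0) (hp : p.Prime) (v : ℕ) {a : ℕ}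
    (ha : a ≠ 0) :
    kgcd k a (((p ^ v : ℕ) : ℤ) ^ k) =
      1 + ∑ j ∈ range v,
        if p ^ ((j + 1) * k) ∣ a then p ^ ((j + 1) * k) - p ^ (j * k) else 0 := by
  have : Fact p.Prime := ⟨hp⟩
  have hmono : Monotone (fun j ↦ p ^ (j * k)) :=
    fun i j hij ↦ Nat.pow_le_pow_right hp.pos (Nat.mul_le_mul_right k hij)
  rw [kgcd_prime_pow hk hp v ha, hmono.apply_eq_add_sum_ite_lt (min_le_left v _)]
  refine congrArg₂ _ (by simp) (sum_congr rfl fun j hj ↦ ?_)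
  have hlayer : j < min v (padicValNat p a / k) ↔ p ^ ((j + 1) * k) ∣ a := by
    rw [padicValNat_dvd_iff_le ha, ← Nat.le_div_iff_mul_le (Nat.pos_of_ne_zero hk), lt_min_iff]
    exact and_iff_right (mem_range.1 hj)
  exact if_congr hlayer rfl rfl

lemma Nat.pow_div_pow_mul_sub {p : ℕ} (hp : 0 < p) {j v : ℕ} (hj : j < v) (k : ℕ) :
    p ^ (v * k) / p ^ ((j + 1) * k) * (p ^ ((j + 1) * k) - p ^ (j * k)) =
      p ^ (v * k) - p ^ ((v - 1) * k) := by
  rw [Nat.pow_div (Nat.mul_le_mul_right k (hj : j + 1 ≤ v)) hp, ← Nat.sub_mul, Nat.mul_sub,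
    ← pow_add, ← pow_add, ← add_mul, ← add_mul]
  congr 3 <;> omega

theorem Pk_prime_pow_general (k : ℕ) (hk : 0 < k) (p : ℕ) (hp : p.Prime) (v : ℕ) :
    Pk k (p ^ v) = (v + 1) * p ^ (v * k) - v * p ^ ((v - 1) * k) := by
  have hlayer (j : ℕ) (hj : j ∈ range v) :
      ∑ a ∈ Icc 1 (p ^ (v * k)),
        (if p ^ ((j + 1) * k) ∣ a then p ^ ((j + 1) * k) - p ^ (j * k) else 0) =
      p ^ (v * k) - p ^ ((v - 1) * k) := by
    rw [Nat.sum_Icc_ite_dvd, Nat.pow_div_pow_mul_sub hp.pos (mem_range.1 hj)]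
  have hle : p ^ ((v - 1) * k) ≤ p ^ (v * k) :=
    Nat.pow_le_pow_right hp.pos (Nat.mul_le_mul_right k (Nat.sub_le v 1))
  calc Pk k (p ^ v)
      = ∑ a ∈ Icc 1 (p ^ (v * k)), (1 + ∑ j ∈ range v,
          if p ^ ((j + 1) * k) ∣ a then p ^ ((j + 1) * k) - p ^ (j * k) else 0) := by
        rw [Pk, ← pow_mul]
        exact sum_congr rfl fun a ha ↦
          kgcd_prime_pow_eq_layers hk.ne' hp v (Nat.one_le_iff_ne_zero.1 (mem_Icc.1 ha).1)
    _ = p ^ (v * k) + v * (p ^ (v * k) - p ^ ((v - 1) * k)) := by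
        rw [sum_add_distrib, sum_comm, sum_congr rfl hlayer]
        simp
    _ = (v + 1) * p ^ (v * k) - v * p ^ ((v - 1) * k) := by
        have := Nat.mul_le_mul_left v hle
        rw [Nat.mul_sub, add_one_mul]
        omega

/-- `P^(k)(p^v) = (v+1)·p^{vk} - v·p^{(v-1)k}` for a prime `p` and positive `k`, `v`. -/
theorem Pk_prime_pow (k : ℕ) (hk : 0 < k) (p : ℕ) (hp : p.Prime) (v : ℕ) (hv : 0 < v) :
    Pk k (p ^ v) = (v + 1) * p ^ (v * k) - v * p ^ ((v - 1) * k) :=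
  Pk_prime_pow_general k hk p hp v
end

section
/- Let k and m be positive integers, let A be a k-th power reduced set of residues modulo m, and let ℓ and s be integers with gcd(ℓ, m) = 1. Then ∑_{a ∈ A} (aℓ - s, m^k)_k = ∑_{a ∈ A} (a - s, m^k)_k. -/
/-- A k-th power reduced set of residues modulo `m`: a set of `φ^(k)(m)` integers, one
from each congruence class modulo `m^k` whose elements `a` satisfy `(a, m^k)_k = 1`. -/
def IsKthPowerReducedResidueSet (k m : ℕ) (A : Finset ℤ) : Prop :=
  A.card = cohenTotient k m ∧
  (∀ a ∈ A, kgcd k a ((m : ℤ) ^ k) = 1) ∧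
  ∀ a ∈ A, ∀ b ∈ A, a ≡ b [ZMOD ((m : ℤ) ^ k)] → a = b

/-!
Write `N = m^k`. The summand `kgcd k (x - s) N` only depends on `x` modulo `N`, and reduction
modulo `N` maps `A` bijectively onto the classes `z` with `(z, N)_k = 1`: injectively by
definition, and onto because both sets have `φ^(k)(m)` elements. Since `ℓ` is a unit modulo `N`
and `(xℓ, N)_k = (x, N)_k`, multiplication by `ℓ` permutes these classes, so both sums are the
same sum over the reduced classes, reindexed.
-/

open Finset

theorem kgcd_congr (k : ℕ) {x y N : ℤ} (h : ∀ n : ℤ, n ∣ N → (n ∣ x ↔ n ∣ y)) :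
    kgcd k x N = kgcd k y N := by
  unfold kgcd
  congr 1
  ext n
  exact and_congr_right fun _ => ⟨fun ⟨hx, hN⟩ => ⟨(h n hN).1 hx, hN⟩,
    fun ⟨hy, hN⟩ => ⟨(h n hN).2 hy, hN⟩⟩

theorem Int.ModEq.kgcd_eq (k : ℕ) {x y N : ℤ} (h : x ≡ y [ZMOD N]) :
    kgcd k x N = kgcd k y N :=
  kgcd_congr k fun n hn => by
    have h' := h.of_dvd hn
    simp only [← Int.modEq_zero_iff_dvd]
    exact ⟨h'.symm.trans, h'.trans⟩

theorem IsCoprime.kgcd_mul_right_cancel (k : ℕ) (x : ℤ) {ℓ N : ℤ} (h : IsCoprime ℓ N) :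
    kgcd k (x * ℓ) N = kgcd k x N :=
  kgcd_congr k fun _ hn =>
    ⟨((h.of_isCoprime_of_dvd_right hn).symm).dvd_of_dvd_mul_right, (Dvd.dvd.mul_right · ℓ)⟩

theorem ZMod.val_intCast_modEq {N : ℕ} [NeZero N] (x : ℤ) :
    ((x : ZMod N).val : ℤ) ≡ x [ZMOD N] := by
  rw [ZMod.val_intCast]
  exact Int.mod_modEq x N

section reducedClasses

variable (k : ℕ) {N : ℕ} [NeZero N]

variable (N) in
noncomputable def reducedClasses : Finset (ZMod N) := {z | kgcd k z.val N = 1}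

theorem mul_unit_mem_reducedClasses_iff (z : ZMod N) (u : (ZMod N)ˣ) :
    z * u ∈ reducedClasses k N ↔ z ∈ reducedClasses k N := by
  have hval : (((z * u).val : ℕ) : ℤ) ≡ z.val * (u : ZMod N).val [ZMOD N] := by
    rw [← ZMod.intCast_eq_intCast_iff]
    simp
  have hu : IsCoprime ((u : ZMod N).val : ℤ) N :=
    Nat.isCoprime_iff_coprime.2 (ZMod.val_coe_unit_coprime u)
  simp only [reducedClasses, mem_filter_univ, hval.kgcd_eq, hu.kgcd_mul_right_cancel]

theorem sum_reducedClasses_mul_unit {M : Type*} [AddCommMonoid M] (F : ZMod N → M)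
    (u : (ZMod N)ˣ) :
    ∑ z ∈ reducedClasses k N, F (z * u) = ∑ z ∈ reducedClasses k N, F z :=
  sum_equiv (Units.mulRight u) (fun z => (mul_unit_mem_reducedClasses_iff k z u).symm)
    fun _ _ => rfl

theorem card_reducedClasses :
    #(reducedClasses k N) = #{a ∈ Icc 1 N | kgcd k (a : ℕ) N = 1} := by
  -- `Icc 1 N` and `range N` are both complete periods of the condition.
  have hper : Function.Periodic (fun a : ℕ => kgcd k a N = 1) N := fun a => by
    simp only [Nat.cast_add, Int.add_modEq_right.kgcd_eq]
  rw [← Finset.Ico_add_one_right_eq_Icc, add_comm, Nat.filter_Ico_card_eq_of_periodic _ _ _ hper,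
    Nat.count_eq_card_filter_range]
  refine card_nbij' ZMod.val Nat.cast
    (fun z hz => ?_) (fun a ha => ?_) (fun z _ => ?_) (fun a ha => ?_)
  · rw [mem_coe, reducedClasses, mem_filter_univ] at hz
    exact mem_coe.2 (mem_filter.2 ⟨mem_range.2 (ZMod.val_lt z), hz⟩)
  · rw [mem_coe, mem_filter, mem_range] at ha
    rw [mem_coe, reducedClasses, mem_filter_univ, ZMod.val_cast_of_lt ha.1]
    exact ha.2
  · exact ZMod.natCast_zmod_val z
  · exact ZMod.val_cast_of_lt (mem_range.1 (mem_filter.1 ha).1)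

end reducedClasses

namespace IsKthPowerReducedResidueSet

variable {k m : ℕ} {A : Finset ℤ}

theorem injOn_intCast (hA : IsKthPowerReducedResidueSet k m A) :
    Set.InjOn (Int.cast : ℤ → ZMod (m ^ k)) A := fun a ha b hb hab =>
  hA.2.2 a ha b hb (by simpa [ZMod.intCast_eq_intCast_iff] using hab)

variable [NeZero (m ^ k)]

theorem image_intCast (hA : IsKthPowerReducedResidueSet k m A) :
    A.image (Int.cast : ℤ → ZMod (m ^ k)) = reducedClasses k (m ^ k) := by
  refine eq_of_subset_of_card_le (fun z hz => ?_) ?_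
  · obtain ⟨a, ha, rfl⟩ := mem_image.1 hz
    rw [reducedClasses, mem_filter_univ, (ZMod.val_intCast_modEq a).kgcd_eq, Nat.cast_pow]
    exact hA.2.1 a ha
  · rw [card_reducedClasses, card_image_of_injOn hA.injOn_intCast, hA.1, cohenTotient,
      Nat.cast_pow]

theorem sum_intCast {M : Type*} [AddCommMonoid M] (hA : IsKthPowerReducedResidueSet k m A)
    (F : ZMod (m ^ k) → M) : ∑ a ∈ A, F a = ∑ z ∈ reducedClasses k (m ^ k), F z := by
  rw [← hA.image_intCast, sum_image hA.injOn_intCast]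

end IsKthPowerReducedResidueSet

theorem sum_kgcd_mul_shift_general (k m : ℕ) (hm : 0 < m) (A : Finset ℤ)
    (hA : IsKthPowerReducedResidueSet k m A) (ℓ s : ℤ) (hℓ : Int.gcd ℓ (m : ℤ) = 1) :
    ∑ a ∈ A, kgcd k (a * ℓ - s) ((m : ℤ) ^ k) =
      ∑ a ∈ A, kgcd k (a - s) ((m : ℤ) ^ k) := by
  have : NeZero (m ^ k) := ⟨(pow_pos hm k).ne'⟩
  have hℓ' : IsCoprime ℓ ((m ^ k : ℕ) : ℤ) := by
    rw [Nat.cast_pow]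
    exact (Int.isCoprime_iff_gcd_eq_one.2 hℓ).pow_right
  set u := ZMod.unitOfIsCoprime ℓ hℓ'
  set F : ZMod (m ^ k) → ℕ := fun z => kgcd k (z.val - s) ((m : ℤ) ^ k)
  have hF : ∀ x : ℤ, F x = kgcd k (x - s) ((m : ℤ) ^ k) := fun x =>
    ((ZMod.val_intCast_modEq x).sub_right s).kgcd_eq k
  calc ∑ a ∈ A, kgcd k (a * ℓ - s) ((m : ℤ) ^ k)
      = ∑ a ∈ A, F (a * u) := by simp only [u, ZMod.coe_unitOfIsCoprime, ← Int.cast_mul, hF]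
    _ = ∑ z ∈ reducedClasses k (m ^ k), F (z * u) := hA.sum_intCast fun z => F (z * u)
    _ = ∑ z ∈ reducedClasses k (m ^ k), F z := sum_reducedClasses_mul_unit k F u
    _ = ∑ a ∈ A, F a := (hA.sum_intCast F).symm
    _ = ∑ a ∈ A, kgcd k (a - s) ((m : ℤ) ^ k) := by simp only [hF]

/-- If `A` is a k-th power reduced set of residues modulo `m` and `gcd(ℓ, m) = 1`,
then `∑_{a ∈ A} (aℓ - s, m^k)_k = ∑_{a ∈ A} (a - s, m^k)_k`. -/
theorem sum_kgcd_mul_shift (k m : ℕ) (hk : 0 < k) (hm : 0 < m) (A : Finset ℤ)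
    (hA : IsKthPowerReducedResidueSet k m A) (ℓ s : ℤ) (hℓ : Int.gcd ℓ (m : ℤ) = 1) :
    ∑ a ∈ A, kgcd k (a * ℓ - s) ((m : ℤ) ^ k) =
      ∑ a ∈ A, kgcd k (a - s) ((m : ℤ) ^ k) :=
  sum_kgcd_mul_shift_general k m hm A hA ℓ s hℓ
end

section
/- For every integer s and every positive integer k, the arithmetic function M_s^(k) is multiplicative: if m₁ and m₂ are relatively prime positive integers, then M_s^(k)(m₁m₂) = M_s^(k)(m₁)·M_s^(k)(m₂). -/
/-- `M_s^(k)(m) = ∑ (a - s, m^k)_k`, the sum over `1 ≤ a ≤ m^k` with `(a, m^k)_k = 1`. -/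
noncomputable def Msk (s : ℤ) (k m : ℕ) : ℕ :=
  ∑ a ∈ (Finset.Icc 1 (m ^ k)).filter (fun a : ℕ => kgcd k (a : ℤ) ((m : ℤ) ^ k) = 1),
    kgcd k ((a : ℤ) - s) ((m : ℤ) ^ k)

/-!
The summand `(a - s, m^k)_k`, restricted to `(a, m^k)_k = 1`, depends only on `a` modulo `m^k`.
For coprime `n₁, n₂` one has `(x, n₁ n₂)_k = (x, n₁)_k (x, n₂)_k`: a `k`-th power `d^k` dividing
`n₁ n₂` splits as `gcd(d, n₁)^k gcd(d, n₂)^k` with `gcd(d, nᵢ)^k ∣ nᵢ`. Hence the summand for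
`m₁ m₂` is the product of the summands for `m₁` and `m₂`, and the Chinese remainder theorem turns
the sum over residues modulo `(m₁ m₂)^k` into the product of the sums modulo `m₁^k` and `m₂^k`.
-/

open Finset Function

theorem Function.Periodic.sum_Icc_one_eq_sum_range {M : Type*} [AddCancelCommMonoid M]
    {f : ℕ → M} {n : ℕ} (hf : Periodic f n) : ∑ a ∈ Icc 1 n, f a = ∑ a ∈ range n, f a := by
  have hshift : ∑ a ∈ Icc 1 n, f a = ∑ a ∈ range n, f (a + 1) := by
    rw [← Ico_add_one_right_eq_Icc, sum_Ico_eq_sum_range]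
    simp only [Nat.add_sub_cancel, add_comm 1]
  rw [hshift]
  apply add_right_cancel (b := f 0)
  rw [← sum_range_succ', sum_range_succ, hf.eq]

theorem Nat.Coprime.sum_range_mul {M : Type*} [AddCommMonoid M] {m n : ℕ} (h : m.Coprime n)
    (F : ℕ → ℕ → M) :
    ∑ a ∈ range (m * n), F (a % m) (a % n) = ∑ b ∈ range m, ∑ c ∈ range n, F b c := by
  have hne : ∀ a ∈ range (m * n), m ≠ 0 ∧ n ≠ 0 := fun a ha =>
    mul_ne_zero_iff.1 (Nat.ne_zero_of_lt (mem_range.1 ha))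
  rw [← sum_product']
  refine sum_nbij' (fun a => (a % m, a % n)) (fun p => Nat.chineseRemainder h p.1 p.2)
    ?_ ?_ ?_ ?_ fun _ _ => rfl
  · intro a ha
    obtain ⟨hm, hn⟩ := hne a ha
    exact mem_product.2
      ⟨mem_range.2 (Nat.mod_lt _ (by omega)), mem_range.2 (Nat.mod_lt _ (by omega))⟩
  · rintro ⟨b, c⟩ hbc
    simp only [mem_product, mem_range] at hbc
    exact mem_range.2 (Nat.chineseRemainder_lt_mul h b c (by omega) (by omega))
  · intro a ha
    obtain ⟨hm, hn⟩ := hne a ha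
    exact ((Nat.chineseRemainder_modEq_unique h (Nat.mod_modEq a m).symm
      (Nat.mod_modEq a n).symm).eq_of_lt_of_lt (mem_range.1 ha)
      (Nat.chineseRemainder_lt_mul h _ _ hm hn)).symm
  · rintro ⟨b, c⟩ hbc
    simp only [mem_product, mem_range] at hbc
    have hcr := (Nat.chineseRemainder h b c).2
    exact Prod.ext (Nat.mod_eq_of_modEq hcr.1 hbc.1) (Nat.mod_eq_of_modEq hcr.2 hbc.2)

section kgcd

variable {k : ℕ} {a b : ℤ}

theorem kgcd_spec (hb : b ≠ 0) :
    ∃ d : ℕ, 0 < d ∧ kgcd k a b = d ^ k ∧ (d : ℤ) ^ k ∣ a ∧ (d : ℤ) ^ k ∣ b := by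
  set S : Set ℕ := {n | (∃ d : ℕ, 0 < d ∧ n = d ^ k) ∧ (n : ℤ) ∣ a ∧ (n : ℤ) ∣ b}
  have hne : S.Nonempty := ⟨1, ⟨1, one_pos, (one_pow k).symm⟩, one_dvd a, one_dvd b⟩
  have hbdd : BddAbove S :=
    ⟨b.natAbs, fun n hn => Nat.le_of_dvd (Int.natAbs_pos.2 hb) (Int.natCast_dvd.1 hn.2.2)⟩
  obtain ⟨⟨d, hd, hkd⟩, hda, hdb⟩ := Nat.sSup_mem hne hbdd
  exact ⟨d, hd, hkd, by simpa [kgcd, hkd] using hda, by simpa [kgcd, hkd] using hdb⟩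

theorem pow_le_kgcd (hb : b ≠ 0) {d : ℕ} (hd : 0 < d) (hda : (d : ℤ) ^ k ∣ a)
    (hdb : (d : ℤ) ^ k ∣ b) : d ^ k ≤ kgcd k a b :=
  le_csSup ⟨b.natAbs, fun n hn => Nat.le_of_dvd (Int.natAbs_pos.2 hb) (Int.natCast_dvd.1 hn.2.2)⟩
    ⟨⟨d, hd, rfl⟩, by exact_mod_cast hda, by exact_mod_cast hdb⟩

theorem kgcd_add_self : kgcd k (a + b) b = kgcd k a b := by
  simp only [kgcd]
  congr 1
  ext n
  exact and_congr_right fun _ => and_congr_left dvd_add_left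

theorem gcd_pow_le_kgcd_of_dvd_mul {d n n' : ℕ} (hd : 0 < d) (hn : n ≠ 0)
    (h : n.Coprime n') (hda : (d : ℤ) ^ k ∣ a) (hdn : d ^ k ∣ n * n') :
    d.gcd n ^ k ≤ kgcd k a n := by
  have hgcd_dvd : d.gcd n ^ k ∣ d ^ k := pow_dvd_pow_of_dvd (Nat.gcd_dvd_left d n) k
  have hcop : (d.gcd n ^ k).Coprime n' := (h.coprime_dvd_left (Nat.gcd_dvd_right d n)).pow_left k
  refine pow_le_kgcd (by positivity) (Nat.gcd_pos_of_pos_left n hd) ?_ ?_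
  · exact (by exact_mod_cast hgcd_dvd : ((d.gcd n : ℤ) ^ k ∣ (d : ℤ) ^ k)).trans hda
  · exact_mod_cast hcop.dvd_of_dvd_mul_right (hgcd_dvd.trans hdn)

theorem kgcd_mul_of_coprime (hk : k ≠ 0) {n₁ n₂ : ℕ} (hn₁ : n₁ ≠ 0) (hn₂ : n₂ ≠ 0)
    (h : n₁.Coprime n₂) : kgcd k a (n₁ * n₂ : ℕ) = kgcd k a n₁ * kgcd k a n₂ := by
  apply le_antisymm
  · obtain ⟨d, hd, hkd, hda, hdn⟩ := kgcd_spec (k := k) (a := a) (b := (n₁ * n₂ : ℕ))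
      (by positivity)
    have hdn : d ^ k ∣ n₁ * n₂ := by exact_mod_cast hdn
    have hsplit : d = d.gcd n₁ * d.gcd n₂ := by
      rw [← h.gcd_mul, Nat.gcd_eq_left ((dvd_pow_self d hk).trans hdn)]
    rw [hkd, hsplit, mul_pow]
    exact Nat.mul_le_mul (gcd_pow_le_kgcd_of_dvd_mul hd hn₁ h hda hdn)
      (gcd_pow_le_kgcd_of_dvd_mul hd hn₂ h.symm hda (mul_comm n₁ n₂ ▸ hdn))
  · obtain ⟨e₁, he₁, hke₁, he₁a, he₁n⟩ := kgcd_spec (k := k) (a := a) (b := n₁) (by positivity)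
    obtain ⟨e₂, he₂, hke₂, he₂a, he₂n⟩ := kgcd_spec (k := k) (a := a) (b := n₂) (by positivity)
    have hcop : IsCoprime ((e₁ : ℤ) ^ k) ((e₂ : ℤ) ^ k) := by
      have : (e₁ ^ k).Coprime (e₂ ^ k) :=
        (h.coprime_dvd_left (by exact_mod_cast he₁n)).coprime_dvd_right (by exact_mod_cast he₂n)
      exact_mod_cast Nat.isCoprime_iff_coprime.2 this
    rw [hke₁, hke₂, ← mul_pow]
    refine pow_le_kgcd (by positivity) (Nat.mul_pos he₁ he₂) ?_ ?_ <;> push_cast <;> rw [mul_pow]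
    · exact hcop.mul_dvd he₁a he₂a
    · exact mul_dvd_mul he₁n he₂n

end kgcd

/-- The summand of `Msk s k m`, zero off the filter, as a function of the modulus `n = m ^ k`. -/
noncomputable def mskTerm (s : ℤ) (k n a : ℕ) : ℕ :=
  if kgcd k a n = 1 then kgcd k (a - s) n else 0

theorem Msk_eq_sum_mskTerm (s : ℤ) (k m : ℕ) :
    Msk s k m = ∑ a ∈ Icc 1 (m ^ k), mskTerm s k (m ^ k) a := by
  simp only [Msk, mskTerm, sum_filter, Nat.cast_pow]

theorem mskTerm_periodic (s : ℤ) (k n : ℕ) : Periodic (mskTerm s k n) n := fun a => by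
  simp only [mskTerm, Nat.cast_add, kgcd_add_self, add_sub_right_comm]

theorem mskTerm_mul_of_coprime (s : ℤ) {k : ℕ} (hk : k ≠ 0) {n₁ n₂ : ℕ} (hn₁ : n₁ ≠ 0)
    (hn₂ : n₂ ≠ 0) (h : n₁.Coprime n₂) (a : ℕ) :
    mskTerm s k (n₁ * n₂) a = mskTerm s k n₁ a * mskTerm s k n₂ a := by
  simp only [mskTerm, kgcd_mul_of_coprime hk hn₁ hn₂ h, mul_eq_one]
  split_ifs <;> simp_all

/-- The arithmetic function `m ↦ M_s^(k)(m)` is multiplicative. -/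
theorem Msk_multiplicative (s : ℤ) (k : ℕ) (hk : 0 < k) (m₁ m₂ : ℕ)
    (hm₁ : 0 < m₁) (hm₂ : 0 < m₂) (h : Nat.Coprime m₁ m₂) :
    Msk s k (m₁ * m₂) = Msk s k m₁ * Msk s k m₂ := by
  have hN : (m₁ ^ k).Coprime (m₂ ^ k) := h.pow k k
  have hterm (a : ℕ) : mskTerm s k ((m₁ * m₂) ^ k) a =
      mskTerm s k (m₁ ^ k) (a % m₁ ^ k) * mskTerm s k (m₂ ^ k) (a % m₂ ^ k) := by
    rw [mul_pow, mskTerm_mul_of_coprime s hk.ne' (pow_ne_zero k hm₁.ne')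
      (pow_ne_zero k hm₂.ne') hN, (mskTerm_periodic s k _).map_mod_nat,
      (mskTerm_periodic s k _).map_mod_nat]
  simp only [Msk_eq_sum_mskTerm, (mskTerm_periodic s k _).sum_Icc_one_eq_sum_range]
  rw [sum_congr rfl fun a _ => hterm a, mul_pow, sum_mul_sum]
  exact hN.sum_range_mul fun b c => mskTerm s k (m₁ ^ k) b * mskTerm s k (m₂ ^ k) c
end

section
/- For every integer s, every positive integer k, every prime p, and every positive integer v, M_s^(k)(p^v) = d_s^(k)(p^v)·φ^(k)(p^v); that is, M_s^(k)(p^v) = p^{vk} - p^{(v-1)k} if p^k divides s, and M_s^(k)(p^v) = (v+1)·(p^{vk} - p^{(v-1)k}) if p^k does not divide s. -/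
/-- `d_s^(k)` evaluated at the prime power `p^v`: `1` if `p^k ∣ s`, else `v + 1`. -/
noncomputable def dskPrimePow (s : ℤ) (k v : ℕ) (p : ℕ) : ℕ :=
  if (p : ℤ) ^ k ∣ s then 1 else v + 1

/-! Put `q = p ^ k`. The `k`-th powers dividing `p ^ (v k)` are the `q ^ j` with `j ≤ v`, so
`(a, p ^ (v k))_k = q ^ j` for the largest `j ≤ v` with `q ^ j ∣ a`; it is `1` exactly when `q ∤ a`.
Expanding `q ^ j = 1 + ∑_{i < j} (q ^ (i+1) - q ^ i)` and exchanging the sums,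
`M = φ + ∑_{i < v} (q ^ (i+1) - q ^ i) · #{a : q ∤ a, q ^ (i+1) ∣ a - s}`.
If `q ∣ s` all these counts vanish. Otherwise `q ^ (i+1) ∣ a - s` already forces `q ∤ a`, so the
count is `q ^ (v-i-1)`, and each of the `v` terms equals `φ = q ^ v - q ^ (v-1)`. -/

open Finset

def maxPowDvd (q v : ℕ) (a : ℤ) : ℕ :=
  q ^ Nat.findGreatest (fun j => (q : ℤ) ^ j ∣ a) v

theorem kgcd_prime_pow_eq {k p : ℕ} (hk : k ≠ 0) (hp : p.Prime) (v : ℕ) (a : ℤ) :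
    kgcd k a (((p ^ v : ℕ) : ℤ) ^ k) = maxPowDvd (p ^ k) v a := by
  have mem : ∀ n : ℕ, ((∃ d : ℕ, 0 < d ∧ n = d ^ k) ∧ (n : ℤ) ∣ a ∧
      (n : ℤ) ∣ ((p ^ v : ℕ) : ℤ) ^ k) ↔ ∃ j ≤ v, n = (p ^ k) ^ j ∧ ((p ^ k : ℕ) : ℤ) ^ j ∣ a := by
    intro n
    constructor
    · rintro ⟨⟨d, -, rfl⟩, hda, hdv⟩
      have hd : d ∣ p ^ v := (Nat.pow_dvd_pow_iff hk).1 (by exact_mod_cast hdv)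
      obtain ⟨j, hj, rfl⟩ := (Nat.dvd_prime_pow hp).1 hd
      refine ⟨j, hj, pow_right_comm _ _ _, ?_⟩
      rwa [← Nat.cast_pow, pow_right_comm]
    · rintro ⟨j, hj, rfl, hja⟩
      rw [← Nat.cast_pow, pow_right_comm] at hja
      rw [pow_right_comm]
      refine ⟨⟨p ^ j, pow_pos hp.pos j, rfl⟩, hja, ?_⟩
      exact_mod_cast pow_dvd_pow_of_dvd (pow_dvd_pow p hj) k
  have hspec : ((p ^ k : ℕ) : ℤ) ^ Nat.findGreatest (fun j => ((p ^ k : ℕ) : ℤ) ^ j ∣ a) v ∣ a :=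
    Nat.findGreatest_spec (P := fun j => ((p ^ k : ℕ) : ℤ) ^ j ∣ a) (Nat.zero_le v) (by simp)
  refine IsGreatest.csSup_eq ⟨(mem _).2 ⟨_, Nat.findGreatest_le v, rfl, hspec⟩, fun n hn => ?_⟩
  obtain ⟨j, hj, rfl, hja⟩ := (mem n).1 hn
  exact Nat.pow_le_pow_right (pow_pos hp.pos k) (Nat.le_findGreatest hj hja)

theorem card_filter_dvd_sub {m : ℕ} (hm : 0 < m) (c : ℕ) (t : ℤ) :
    ((Ioc 0 (m * c)).filter fun a : ℕ => (m : ℤ) ∣ a - t).card = c := by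
  obtain ⟨r, hr⟩ : ∃ r : ℕ, t % m = r :=
    Int.eq_ofNat_of_zero_le (Int.emod_nonneg t (Int.natCast_ne_zero.2 hm.ne'))
  have hcond : ∀ a : ℕ, (m : ℤ) ∣ a - t ↔ a ≡ r [MOD m] := by
    intro a
    rw [← Int.natCast_modEq_iff, ← hr, ← Int.modEq_iff_dvd]
    exact ⟨fun h => h.symm.trans (Int.mod_modEq t m).symm,
      fun h => (Int.mod_modEq t m).symm.trans h.symm⟩
  have hshift : ((m * c : ℕ) - r : ℚ) / m = ((0 : ℕ) - r : ℚ) / m + c := by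
    field_simp
    push_cast
    ring
  rw [filter_congr fun a _ => hcond a, ← Nat.cast_inj (R := ℤ), Nat.Ioc_filter_modEq_card _ _ hm,
    hshift, Int.floor_add_natCast]
  simp

section

variable {q v : ℕ}

theorem maxPowDvd_eq_one_iff (hq : 2 ≤ q) (hv : v ≠ 0) (a : ℤ) :
    maxPowDvd q v a = 1 ↔ ¬ (q : ℤ) ∣ a := by
  rw [maxPowDvd, pow_eq_one_iff_right (by omega), Nat.findGreatest_eq_zero_iff]
  constructor
  · intro h
    simpa using h one_pos (Nat.one_le_iff_ne_zero.2 hv)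
  · intro h j hj _ hja
    exact h ((dvd_pow_self _ hj.ne').trans hja)

theorem maxPowDvd_eq_one_add_sum (hq : 0 < q) (a : ℤ) :
    maxPowDvd q v a =
      1 + ∑ i ∈ range v, if (q : ℤ) ^ (i + 1) ∣ a then q ^ (i + 1) - q ^ i else 0 := by
  rw [maxPowDvd]
  set J := Nat.findGreatest (fun j => (q : ℤ) ^ j ∣ a) v
  have hJ : (q : ℤ) ^ J ∣ a :=
    Nat.findGreatest_spec (P := fun j => (q : ℤ) ^ j ∣ a) (Nat.zero_le v) (by simp)
  have hrange : (range v).filter (fun i => (q : ℤ) ^ (i + 1) ∣ a) = range J := by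
    ext i
    simp only [mem_filter, mem_range]
    constructor
    · rintro ⟨hi, hia⟩
      exact Nat.le_findGreatest hi hia
    · intro hi
      exact ⟨hi.trans_le (Nat.findGreatest_le v), (pow_dvd_pow _ hi).trans hJ⟩
  rw [← sum_filter, hrange, sum_range_tsub (pow_right_mono₀ hq) J, pow_zero]
  have : 1 ≤ q ^ J := Nat.one_le_pow _ _ hq
  omega

theorem card_filter_not_dvd (hq : 0 < q) (hv : v ≠ 0) :
    ((Ioc 0 (q ^ v)).filter fun a : ℕ => ¬ (q : ℤ) ∣ a).card = q ^ v - q ^ (v - 1) := by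
  simp only [Int.natCast_dvd_natCast]
  rw [filter_not, card_sdiff_of_subset (filter_subset _ _), Nat.Ioc_filter_dvd_card_eq_div,
    Nat.card_Ioc, Nat.sub_zero, Nat.div_eq_of_eq_mul_left hq (pow_sub_one_mul hv q).symm]

theorem card_filter_not_dvd_filter_pow_dvd_sub (hq : 0 < q) {i : ℕ} (hi : i + 1 ≤ v)
    (s : ℤ) :
    (((Ioc 0 (q ^ v)).filter fun a : ℕ => ¬ (q : ℤ) ∣ a).filter
      fun a : ℕ => (q : ℤ) ^ (i + 1) ∣ a - s).card =
      if (q : ℤ) ∣ s then 0 else q ^ (v - (i + 1)) := by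
  have hqs : ∀ a : ℤ, (q : ℤ) ^ (i + 1) ∣ a - s → ((q : ℤ) ∣ a ↔ (q : ℤ) ∣ s) := by
    intro a ha
    have hd : (q : ℤ) ∣ a - s := (dvd_pow_self _ i.succ_ne_zero).trans ha
    exact ⟨fun h => by simpa using dvd_sub h hd, fun h => by simpa using dvd_add hd h⟩
  rw [filter_filter]
  split_ifs with hs
  · exact card_eq_zero.2 (filter_false_of_mem fun a _ ⟨hna, ha⟩ => hna ((hqs a ha).2 hs))
  · rw [filter_congr fun (a : ℕ) _ => and_iff_right_of_imp fun ha => (hqs a ha).not.2 hs,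
      ← pow_mul_pow_sub q hi]
    exact_mod_cast card_filter_dvd_sub (pow_pos hq _) _ s

theorem sum_maxPowDvd_sub (hq : 0 < q) (hv : v ≠ 0) (s : ℤ) :
    ∑ a ∈ (Ioc 0 (q ^ v)).filter (fun a : ℕ => ¬ (q : ℤ) ∣ a), maxPowDvd q v (a - s) =
      (if (q : ℤ) ∣ s then 1 else v + 1) * (q ^ v - q ^ (v - 1)) := by
  have hlevel : ∀ i ∈ range v,
      ∑ a ∈ (Ioc 0 (q ^ v)).filter (fun a : ℕ => ¬ (q : ℤ) ∣ a),
        (if (q : ℤ) ^ (i + 1) ∣ a - s then q ^ (i + 1) - q ^ i else 0) =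
      if (q : ℤ) ∣ s then 0 else q ^ v - q ^ (v - 1) := by
    intro i hi
    rw [mem_range] at hi
    rw [← sum_filter, sum_const, smul_eq_mul, card_filter_not_dvd_filter_pow_dvd_sub hq hi s]
    split_ifs
    · exact zero_mul _
    · rw [Nat.mul_sub, ← pow_add, ← pow_add]
      congr 2 <;> omega
  simp only [maxPowDvd_eq_one_add_sum hq]
  rw [sum_add_distrib, sum_comm, sum_congr rfl hlevel, sum_const, sum_const, card_range,
    card_filter_not_dvd hq hv]
  split_ifs <;> simp only [smul_eq_mul] <;> ring

end

section

variable {k p v : ℕ}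

theorem filter_kgcd_eq_one_prime_pow (hk : k ≠ 0) (hp : p.Prime) (hv : v ≠ 0) :
    ((Icc 1 ((p ^ v) ^ k)).filter fun a : ℕ => kgcd k a (((p ^ v : ℕ) : ℤ) ^ k) = 1) =
      (Ioc 0 ((p ^ k) ^ v)).filter fun a : ℕ => ¬ ((p ^ k : ℕ) : ℤ) ∣ a := by
  rw [pow_right_comm, ← Icc_add_one_left_eq_Ioc, zero_add]
  refine filter_congr fun a _ => ?_
  rw [kgcd_prime_pow_eq hk hp, maxPowDvd_eq_one_iff (Nat.one_lt_pow hk hp.one_lt) hv]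

theorem cohenTotient_prime_pow (hk : k ≠ 0) (hp : p.Prime) (hv : v ≠ 0) :
    cohenTotient k (p ^ v) = (p ^ k) ^ v - (p ^ k) ^ (v - 1) := by
  rw [cohenTotient, filter_kgcd_eq_one_prime_pow hk hp hv,
    card_filter_not_dvd (pow_pos hp.pos k) hv]

theorem Msk_prime_pow_eq_dskPrimePow_mul (hk : k ≠ 0) (hp : p.Prime) (hv : v ≠ 0) (s : ℤ) :
    Msk s k (p ^ v) = dskPrimePow s k v p * ((p ^ k) ^ v - (p ^ k) ^ (v - 1)) := by
  rw [Msk, filter_kgcd_eq_one_prime_pow hk hp hv]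
  simp only [kgcd_prime_pow_eq hk hp]
  rw [sum_maxPowDvd_sub (pow_pos hp.pos k) hv, dskPrimePow, Nat.cast_pow]

end

/-- `M_s^(k)(p^v) = d_s^(k)(p^v)·φ^(k)(p^v)`; explicitly, `M_s^(k)(p^v) = p^{vk} - p^{(v-1)k}`
if `p^k ∣ s`, and `M_s^(k)(p^v) = (v+1)·(p^{vk} - p^{(v-1)k})` otherwise. -/
theorem Msk_prime_pow (s : ℤ) (k : ℕ) (hk : 0 < k) (p : ℕ) (hp : p.Prime)
    (v : ℕ) (hv : 0 < v) :
    Msk s k (p ^ v) = dskPrimePow s k v p * cohenTotient k (p ^ v) ∧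
      ((p : ℤ) ^ k ∣ s → Msk s k (p ^ v) = p ^ (v * k) - p ^ ((v - 1) * k)) ∧
      (¬ (p : ℤ) ^ k ∣ s → Msk s k (p ^ v) = (v + 1) * (p ^ (v * k) - p ^ ((v - 1) * k))) := by
  have hM := Msk_prime_pow_eq_dskPrimePow_mul hk.ne' hp hv.ne' s
  have hpow : (p ^ k) ^ v - (p ^ k) ^ (v - 1) = p ^ (v * k) - p ^ ((v - 1) * k) := by
    rw [← pow_mul, ← pow_mul, mul_comm k, mul_comm k]
  rw [hpow] at hM
  refine ⟨by rw [hM, cohenTotient_prime_pow hk.ne' hp hv.ne', hpow], fun hs => ?_, fun hs => ?_⟩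
  · rw [hM, dskPrimePow, if_pos hs, one_mul]
  · rw [hM, dskPrimePow, if_neg hs]
end
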